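/- arXiv:2406.15652 — 6 statements merged into one kernel-verified Lean document; each statement's English description precedes it below -/
import Mathlib

section
/- Strong consistency of the unnormalized importance-sampling estimator: almost surely, (1/n) · ∑_{i<n} (p(X_i)/q(X_i)) · f(X_i) converges to ∫ f dP as n → ∞. -/
/-!
Under `Q = q • ν`, the weighted function `(p / q) • f` has mean `∫ f ∂P`: multiplying by the
density `q` turns it into `p • f` wherever `q ≠ 0`, and where `q = 0` both sides vanish `ν`-a.e.
because `p = 0` there (the junk value `p / 0 = 0` is harmless). So the estimator is the empirical
mean of the i.i.d. integrable real variables `((p / q) • f) (X i)`, and Etemadi's strong law of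
large numbers applies.
-/

open MeasureTheory ProbabilityTheory Filter Topology Finset
open scoped NNReal ENNReal

section ChangeOfDensity

variable {E F : Type*} [MeasurableSpace E] [NormedAddCommGroup F] [NormedSpace ℝ F]
  {ν : Measure E} {p q : E → ℝ≥0}

lemma ae_smul_div_smul_eq (habs : ∀ᵐ x ∂ν, q x = 0 → p x = 0) (f : E → F) :
    (fun x => q x • ((p x : ℝ) / q x) • f x) =ᵐ[ν] fun x => p x • f x := by
  filter_upwards [habs] with x hx
  rcases eq_or_ne (q x) 0 with h | h
  · simp [h, hx h]
  · rw [NNReal.smul_def, NNReal.smul_def, smul_smul,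
      mul_div_cancel₀ _ (NNReal.coe_ne_zero.mpr h)]

lemma integrable_withDensity_div_smul (hp : Measurable p) (hq : Measurable q)
    (habs : ∀ᵐ x ∂ν, q x = 0 → p x = 0) {f : E → F}
    (hf : Integrable f (ν.withDensity fun x => (p x : ℝ≥0∞))) :
    Integrable (fun x => ((p x : ℝ) / q x) • f x) (ν.withDensity fun x => (q x : ℝ≥0∞)) := by
  rw [integrable_withDensity_iff_integrable_smul hp] at hf
  rw [integrable_withDensity_iff_integrable_smul hq]
  exact hf.congr (ae_smul_div_smul_eq habs f).symm

lemma integral_withDensity_div_smul (hp : Measurable p) (hq : Measurable q)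
    (habs : ∀ᵐ x ∂ν, q x = 0 → p x = 0) (f : E → F) :
    ∫ x, ((p x : ℝ) / q x) • f x ∂(ν.withDensity fun x => (q x : ℝ≥0∞)) =
      ∫ x, f x ∂(ν.withDensity fun x => (p x : ℝ≥0∞)) := by
  rw [integral_withDensity_eq_integral_smul hq, integral_withDensity_eq_integral_smul hp]
  exact integral_congr_ae (ae_smul_div_smul_eq habs f)

end ChangeOfDensity

theorem strong_law_ae_comp {Ω E F : Type*} [MeasurableSpace Ω] [MeasurableSpace E]
    [NormedAddCommGroup F] [NormedSpace ℝ F] [CompleteSpace F] [MeasurableSpace F]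
    [BorelSpace F] {μ : Measure Ω} {Q : Measure E} {X : ℕ → Ω → E}
    (hX : ∀ i, AEMeasurable (X i) μ) (hindep : Pairwise fun i j => X i ⟂ᵢ[μ] X j)
    (hlaw : ∀ i, μ.map (X i) = Q) {g : E → F} (hg : StronglyMeasurable g)
    (hint : Integrable g Q) :
    ∀ᵐ ω ∂μ, Tendsto (fun n : ℕ => (n : ℝ)⁻¹ • ∑ i ∈ range n, g (X i ω)) atTop
      (𝓝 (∫ x, g x ∂Q)) := by
  have hident : ∀ i, IdentDistrib (X i) (X 0) μ μ := fun i =>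
    ⟨hX i, hX 0, by rw [hlaw i, hlaw 0]⟩
  have hint₀ : Integrable (g ∘ X 0) μ := by
    rw [← hlaw 0] at hint
    exact (integrable_map_measure hg.aestronglyMeasurable (hX 0)).mp hint
  have hmean : μ[g ∘ X 0] = ∫ x, g x ∂Q := by
    rw [← hlaw 0, integral_map (hX 0) hg.aestronglyMeasurable]
    rfl
  rw [← hmean]
  exact strong_law_ae (fun i => g ∘ X i) hint₀
    (fun i j hij => (hindep hij).comp hg.measurable hg.measurable)
    (fun i => (hident i).comp hg.measurable)

theorem importance_sampling_unnormalized_strong_consistency_general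
    {E Ω : Type*} [MeasurableSpace E] [MeasurableSpace Ω]
    (ν : Measure E)
    (p q : E → ℝ≥0) (hp : Measurable p) (hq : Measurable q)
    (habs : ∀ᵐ x ∂ν, q x = 0 → p x = 0)
    (μ : Measure Ω)
    (X : ℕ → Ω → E) (hXmeas : ∀ i, Measurable (X i))
    (hindep : iIndepFun X μ)
    (hlaw : ∀ i, Measure.map (X i) μ = ν.withDensity fun x => (q x : ℝ≥0∞))
    (f : E → ℝ) (hf : Measurable f)
    (hfint : Integrable f (ν.withDensity fun x => (p x : ℝ≥0∞))) :
    ∀ᵐ ω ∂μ, Tendsto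
      (fun n : ℕ => (1 / (n : ℝ)) * ∑ i ∈ Finset.range n,
        ((p (X i ω) : ℝ) / (q (X i ω) : ℝ)) * f (X i ω))
      atTop (𝓝 (∫ x, f x ∂(ν.withDensity fun x => (p x : ℝ≥0∞)))) := by
  have hg : StronglyMeasurable fun x => ((p x : ℝ) / q x) • f x :=
    ((hp.coe_nnreal_real.div hq.coe_nnreal_real).smul hf).stronglyMeasurable
  filter_upwards [strong_law_ae_comp (fun i => (hXmeas i).aemeasurable)
    (fun i j hij => hindep.indepFun hij) hlaw hg
    (integrable_withDensity_div_smul hp hq habs hfint)] with ω hω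
  rw [integral_withDensity_div_smul hp hq habs] at hω
  simpa only [one_div, smul_eq_mul] using hω

/-- **Strong consistency of the unnormalized importance-sampling estimator.**
Let `ν` be a σ-finite measure, `p q : E → ℝ≥0` measurable densities such that
`P := ν.withDensity p` and `Q := ν.withDensity q` are probability measures, with
`q x = 0 → p x = 0` for `ν`-a.e. `x`.  If `(X i)` is an i.i.d. sequence with law `Q`
and `f` is measurable and `P`-integrable, then almost surely
`(1/n) * ∑_{i<n} (p (X i) / q (X i)) * f (X i) → ∫ f dP`. -/
theorem importance_sampling_unnormalized_strong_consistency
    {E Ω : Type*} [MeasurableSpace E] [MeasurableSpace Ω]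
    (ν : Measure E) [SigmaFinite ν]
    (p q : E → ℝ≥0) (hp : Measurable p) (hq : Measurable q)
    [IsProbabilityMeasure (ν.withDensity fun x => (p x : ℝ≥0∞))]
    [IsProbabilityMeasure (ν.withDensity fun x => (q x : ℝ≥0∞))]
    (habs : ∀ᵐ x ∂ν, q x = 0 → p x = 0)
    (μ : Measure Ω) [IsProbabilityMeasure μ]
    (X : ℕ → Ω → E) (hXmeas : ∀ i, Measurable (X i))
    (hindep : iIndepFun X μ)
    (hlaw : ∀ i, Measure.map (X i) μ = ν.withDensity fun x => (q x : ℝ≥0∞))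
    (f : E → ℝ) (hf : Measurable f)
    (hfint : Integrable f (ν.withDensity fun x => (p x : ℝ≥0∞))) :
    ∀ᵐ ω ∂μ, Tendsto
      (fun n : ℕ => (1 / (n : ℝ)) * ∑ i ∈ Finset.range n,
        ((p (X i ω) : ℝ) / (q (X i ω) : ℝ)) * f (X i ω))
      atTop (𝓝 (∫ x, f x ∂(ν.withDensity fun x => (p x : ℝ≥0∞)))) :=
  importance_sampling_unnormalized_strong_consistency_general ν p q hp hq habs μ X hXmeas hindep
    hlaw f hf hfint
end

section
/- Strong consistency of the importance-sampling log-density (logpdf) estimator: almost surely, log((1/n) · ∑_{i<n} V_i) − log((1/n) · ∑_{i<n} W_i) converges to log(𝔼[V_0] / 𝔼[W_0]) as n → ∞. -/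
open MeasureTheory ProbabilityTheory Filter Topology

theorem ae_tendsto_log_empirical_mean {Ω : Type*} [MeasurableSpace Ω] {μ : Measure Ω}
    (X : ℕ → Ω → ℝ) (hint : Integrable (X 0) μ) (hindep : Pairwise fun i j => X i ⟂ᵢ[μ] X j)
    (hident : ∀ i, IdentDistrib (X i) (X 0) μ μ) (hmean : μ[X 0] ≠ 0) :
    ∀ᵐ ω ∂μ, Tendsto (fun n : ℕ => Real.log ((1 / (n : ℝ)) * ∑ i ∈ Finset.range n, X i ω))
      atTop (𝓝 (Real.log μ[X 0])) := by
  filter_upwards [strong_law_ae_real X hint hindep hident] with ω hω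
  simpa only [one_div_mul_eq_div, Function.comp_def] using
    (Real.continuousAt_log hmean).tendsto.comp hω

theorem logpdf_estimator_strong_consistency_general
    {Ω : Type*} [MeasurableSpace Ω] (μ : Measure Ω)
    (W V : ℕ → Ω → ℝ)
    (hWindep : iIndepFun W μ)
    (hVindep : iIndepFun V μ)
    (hWident : ∀ i, IdentDistrib (W i) (W 0) μ μ)
    (hVident : ∀ i, IdentDistrib (V i) (V 0) μ μ)
    (hWint : Integrable (W 0) μ) (hVint : Integrable (V 0) μ)
    (hWpos : 0 < ∫ ω, W 0 ω ∂μ) (hVpos : 0 < ∫ ω, V 0 ω ∂μ) :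
    ∀ᵐ ω ∂μ, Tendsto
      (fun n : ℕ =>
        Real.log ((1 / (n : ℝ)) * ∑ i ∈ Finset.range n, V i ω) -
          Real.log ((1 / (n : ℝ)) * ∑ i ∈ Finset.range n, W i ω))
      atTop (𝓝 (Real.log ((∫ ω, V 0 ω ∂μ) / ∫ ω, W 0 ω ∂μ))) := by
  filter_upwards [ae_tendsto_log_empirical_mean V hVint (fun _ _ hij => hVindep.indepFun hij)
      hVident hVpos.ne',
    ae_tendsto_log_empirical_mean W hWint (fun _ _ hij => hWindep.indepFun hij)
      hWident hWpos.ne'] with ω hVω hWω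
  rw [Real.log_div hVpos.ne' hWpos.ne']
  exact hVω.sub hWω

/-- **Strong consistency of the importance-sampling log-density (logpdf) estimator.**
If `(W i)` and `(V i)` are each i.i.d. sequences of nonnegative integrable real random
variables with positive means, then almost surely
`log ((1/n) * ∑_{i<n} V i) - log ((1/n) * ∑_{i<n} W i) → log (𝔼[V 0] / 𝔼[W 0])`. -/
theorem logpdf_estimator_strong_consistency
    {Ω : Type*} [MeasurableSpace Ω] (μ : Measure Ω) [IsProbabilityMeasure μ]
    (W V : ℕ → Ω → ℝ)
    (hWmeas : ∀ i, Measurable (W i)) (hVmeas : ∀ i, Measurable (V i))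
    (hWindep : iIndepFun W μ)
    (hVindep : iIndepFun V μ)
    (hWident : ∀ i, IdentDistrib (W i) (W 0) μ μ)
    (hVident : ∀ i, IdentDistrib (V i) (V 0) μ μ)
    (hWnonneg : ∀ᵐ ω ∂μ, 0 ≤ W 0 ω) (hVnonneg : ∀ᵐ ω ∂μ, 0 ≤ V 0 ω)
    (hWint : Integrable (W 0) μ) (hVint : Integrable (V 0) μ)
    (hWpos : 0 < ∫ ω, W 0 ω ∂μ) (hVpos : 0 < ∫ ω, V 0 ω ∂μ) :
    ∀ᵐ ω ∂μ, Tendsto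
      (fun n : ℕ =>
        Real.log ((1 / (n : ℝ)) * ∑ i ∈ Finset.range n, V i ω) -
          Real.log ((1 / (n : ℝ)) * ∑ i ∈ Finset.range n, W i ω))
      atTop (𝓝 (Real.log ((∫ ω, V 0 ω ∂μ) / ∫ ω, W 0 ω ∂μ))) :=
  logpdf_estimator_strong_consistency_general μ W V hWindep hVindep hWident hVident hWint hVint
    hWpos hVpos
end

section
/- Strong consistency of the self-normalized importance-sampling estimator: almost surely, (∑_{i<n} W_i · f(X_i)) / (∑_{i<n} W_i) converges to 𝔼[W_0 · f(X_0)] / 𝔼[W_0] as n → ∞. -/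
open MeasureTheory ProbabilityTheory Filter Topology

/-! Numerator and denominator, each divided by `n`, are empirical means of the i.i.d. sequences
`W i * f (X i)` and `W i`, so by the strong law of large numbers they converge almost surely to
`𝔼[W 0 * f (X 0)]` and `𝔼[W 0] ≠ 0`; the estimator is their quotient. -/

theorem tendsto_div_of_tendsto_div_natCast {a b : ℕ → ℝ} {A B : ℝ}
    (ha : Tendsto (fun n : ℕ => a n / n) atTop (𝓝 A))
    (hb : Tendsto (fun n : ℕ => b n / n) atTop (𝓝 B)) (hB : B ≠ 0) :
    Tendsto (fun n => a n / b n) atTop (𝓝 (A / B)) := by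
  refine (ha.div hb hB).congr' ?_
  filter_upwards [eventually_ne_atTop 0] with n hn
  exact div_div_div_cancel_right₀ (Nat.cast_ne_zero.mpr hn) (a n) (b n)

namespace MeasureTheory

theorem Integrable.mul_of_nonneg_of_mul_abs {Ω : Type*} {mΩ : MeasurableSpace Ω}
    {μ : Measure Ω} {w h : Ω → ℝ} (hw : 0 ≤ᵐ[μ] w)
    (hwh : Integrable (fun ω => w ω * |h ω|) μ)
    (hm : AEStronglyMeasurable (fun ω => w ω * h ω) μ) :
    Integrable (fun ω => w ω * h ω) μ := by
  refine (integrable_norm_iff hm).mp (hwh.congr ?_)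
  filter_upwards [hw] with ω hω
  simp only [Real.norm_eq_abs, abs_mul, abs_of_nonneg hω]

end MeasureTheory

namespace ProbabilityTheory

theorem strong_law_ae_real_comp {Ω α : Type*} {mΩ : MeasurableSpace Ω} [MeasurableSpace α]
    {μ : Measure Ω} (Z : ℕ → Ω → α) (hindep : Pairwise fun i j => Z i ⟂ᵢ[μ] Z j)
    (hident : ∀ i, IdentDistrib (Z i) (Z 0) μ μ) {g : α → ℝ} (hg : Measurable g)
    (hint : Integrable (fun ω => g (Z 0 ω)) μ) :
    ∀ᵐ ω ∂μ, Tendsto (fun n : ℕ => (∑ i ∈ Finset.range n, g (Z i ω)) / n) atTop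
      (𝓝 (∫ ω, g (Z 0 ω) ∂μ)) :=
  strong_law_ae_real (fun i ω => g (Z i ω)) hint
    (fun _ _ hij => (hindep hij).comp hg hg) (fun i => (hident i).comp hg)

end ProbabilityTheory

theorem self_normalized_importance_sampling_strong_consistency_general
    {Ω E : Type*} [MeasurableSpace Ω] [MeasurableSpace E]
    (μ : Measure Ω)
    (X : ℕ → Ω → E) (W : ℕ → Ω → ℝ)
    (hindep : iIndepFun (fun i ω => (X i ω, W i ω)) μ)
    (hident : ∀ i, IdentDistrib (fun ω => (X i ω, W i ω)) (fun ω => (X 0 ω, W 0 ω)) μ μ)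
    (hWnonneg : ∀ᵐ ω ∂μ, 0 ≤ W 0 ω)
    (hWint : Integrable (W 0) μ)
    (hWpos : 0 < ∫ ω, W 0 ω ∂μ)
    (f : E → ℝ) (hf : Measurable f)
    (hWfint : Integrable (fun ω => W 0 ω * |f (X 0 ω)|) μ) :
    ∀ᵐ ω ∂μ, Tendsto
      (fun n : ℕ =>
        (∑ i ∈ Finset.range n, W i ω * f (X i ω)) / ∑ i ∈ Finset.range n, W i ω)
      atTop (𝓝 ((∫ ω, W 0 ω * f (X 0 ω) ∂μ) / ∫ ω, W 0 ω ∂μ)) := by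
  have hpairwise := fun i j (hij : i ≠ j) => hindep.indepFun hij
  have hWf : Measurable fun p : E × ℝ => p.2 * f p.1 :=
    measurable_snd.mul (hf.comp measurable_fst)
  have hWfint' : Integrable (fun ω => W 0 ω * f (X 0 ω)) μ :=
    hWfint.mul_of_nonneg_of_mul_abs hWnonneg
      (hWf.comp_aemeasurable (hident 0).aemeasurable_fst).aestronglyMeasurable
  filter_upwards [strong_law_ae_real_comp _ hpairwise hident hWf hWfint',
    strong_law_ae_real_comp _ hpairwise hident measurable_snd hWint] with ω hnum hden
  exact tendsto_div_of_tendsto_div_natCast hnum hden hWpos.ne'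

/-- **Strong consistency of the self-normalized importance-sampling estimator.**
If `((X i, W i))` is an i.i.d. sequence in `E × ℝ` with `W 0 ≥ 0` a.s., `W 0` integrable,
`0 < 𝔼[W 0]`, and `f : E → ℝ` is measurable with `𝔼[W 0 * |f (X 0)|] < ∞`, then almost surely
`(∑_{i<n} W i * f (X i)) / (∑_{i<n} W i) → 𝔼[W 0 * f (X 0)] / 𝔼[W 0]`. -/
theorem self_normalized_importance_sampling_strong_consistency
    {Ω E : Type*} [MeasurableSpace Ω] [MeasurableSpace E]
    (μ : Measure Ω) [IsProbabilityMeasure μ]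
    (X : ℕ → Ω → E) (W : ℕ → Ω → ℝ)
    (hXmeas : ∀ i, Measurable (X i)) (hWmeas : ∀ i, Measurable (W i))
    (hindep : iIndepFun (fun i ω => (X i ω, W i ω)) μ)
    (hident : ∀ i, IdentDistrib (fun ω => (X i ω, W i ω)) (fun ω => (X 0 ω, W 0 ω)) μ μ)
    (hWnonneg : ∀ᵐ ω ∂μ, 0 ≤ W 0 ω)
    (hWint : Integrable (W 0) μ)
    (hWpos : 0 < ∫ ω, W 0 ω ∂μ)
    (f : E → ℝ) (hf : Measurable f)
    (hWfint : Integrable (fun ω => W 0 ω * |f (X 0 ω)|) μ) :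
    ∀ᵐ ω ∂μ, Tendsto
      (fun n : ℕ =>
        (∑ i ∈ Finset.range n, W i ω * f (X i ω)) / ∑ i ∈ Finset.range n, W i ω)
      atTop (𝓝 ((∫ ω, W 0 ω * f (X 0 ω) ∂μ) / ∫ ω, W 0 ω ∂μ)) :=
  self_normalized_importance_sampling_strong_consistency_general μ X W hindep hident hWnonneg hWint
    hWpos f hf hWfint
end

section
/- Inclusion–exclusion formula for the measure of a box in terms of the multivariate distribution function: if a i ≤ b i for all i ∈ ι, then μ {x | ∀ i, a i < x i ∧ x i ≤ b i} = ∑_{S ⊆ ι} (−1)^{|ι| − |S|} · μ {x | ∀ i, x i ≤ c_S i}, where c_S i = b i if i ∈ S and c_S i = a i otherwise, and the sum ranges over all subsets S of ι. -/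
open MeasureTheory Set

/-- **Inclusion–exclusion formula for the measure of a box in terms of the multivariate
distribution function.**  For a finite Borel measure `μ` on `ι → ℝ` and `a ≤ b` coordinatewise,
`μ {x | ∀ i, a i < x i ≤ b i}` equals
`∑_{S ⊆ ι} (-1)^(|ι| - |S|) * μ {x | ∀ i, x i ≤ c_S i}` where `c_S i = b i` if `i ∈ S` and
`c_S i = a i` otherwise. -/
theorem measure_box_inclusion_exclusion
    {ι : Type*} [Fintype ι] [DecidableEq ι]
    (μ : Measure (ι → ℝ)) [IsFiniteMeasure μ]
    (a b : ι → ℝ) (hab : ∀ i, a i ≤ b i) :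
    (μ {x | ∀ i, a i < x i ∧ x i ≤ b i}).toReal =
      ∑ S : Finset ι, (-1 : ℝ) ^ (Fintype.card ι - S.card) *
        (μ {x | ∀ i, x i ≤ if i ∈ S then b i else a i}).toReal := by
  classical
  have hQ : ∀ c : ι → ℝ, MeasurableSet {x : ι → ℝ | ∀ i, x i ≤ c i} := by
    intro c
    have : {x : ι → ℝ | ∀ i, x i ≤ c i} = ⋂ i, (fun x : ι → ℝ => x i) ⁻¹' Iic (c i) := by
      ext x; simp
    rw [this]
    exact MeasurableSet.iInter fun i => (measurable_pi_apply i) measurableSet_Iic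
  have hbox : MeasurableSet {x : ι → ℝ | ∀ i, a i < x i ∧ x i ≤ b i} := by
    have : {x : ι → ℝ | ∀ i, a i < x i ∧ x i ≤ b i}
        = ⋂ i, (fun x : ι → ℝ => x i) ⁻¹' Ioc (a i) (b i) := by ext x; simp
    rw [this]
    exact MeasurableSet.iInter fun i => (measurable_pi_apply i) measurableSet_Ioc
  -- pointwise identity of indicator functions
  have key : ∀ x : ι → ℝ,
      indicator {x : ι → ℝ | ∀ i, a i < x i ∧ x i ≤ b i} (fun _ => (1:ℝ)) x
      = ∑ S : Finset ι, (-1 : ℝ) ^ (Fintype.card ι - S.card) *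
          indicator {x : ι → ℝ | ∀ i, x i ≤ if i ∈ S then b i else a i} (fun _ => (1:ℝ)) x := by
    intro x
    have hL : indicator {x : ι → ℝ | ∀ i, a i < x i ∧ x i ≤ b i} (fun _ => (1:ℝ)) x
        = ∏ i : ι, ((if x i ≤ b i then (1:ℝ) else 0) - (if x i ≤ a i then (1:ℝ) else 0)) := by
      rw [indicator_apply]
      have : ∀ i : ι, ((if x i ≤ b i then (1:ℝ) else 0) - (if x i ≤ a i then (1:ℝ) else 0))
          = if a i < x i ∧ x i ≤ b i then (1:ℝ) else 0 := by
        intro i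
        by_cases h1 : x i ≤ a i
        · have h2 : x i ≤ b i := h1.trans (hab i)
          simp [h1, h2, not_lt.mpr h1]
        · by_cases h2 : x i ≤ b i <;> simp [h1, h2, not_le.mp h1]
      simp only [this, Finset.prod_boole]
      by_cases h : ∀ i, a i < x i ∧ x i ≤ b i <;> simp [h, Set.mem_setOf_eq]
    have hR : ∀ S : Finset ι,
        indicator {x : ι → ℝ | ∀ i, x i ≤ if i ∈ S then b i else a i} (fun _ => (1:ℝ)) x
        = (∏ i ∈ Finset.univ \ S, (if x i ≤ a i then (1:ℝ) else 0))
            * ∏ i ∈ S, (if x i ≤ b i then (1:ℝ) else 0) := by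
      intro S
      rw [indicator_apply]
      have : ((∏ i ∈ Finset.univ \ S, (if x i ≤ a i then (1:ℝ) else 0))
            * ∏ i ∈ S, (if x i ≤ b i then (1:ℝ) else 0))
          = ∏ i : ι, (if x i ≤ (if i ∈ S then b i else a i) then (1:ℝ) else 0) := by
        rw [← Finset.prod_sdiff (S.subset_univ)]
        congr 1
        · exact Finset.prod_congr rfl fun i hi => by
            simp [(Finset.mem_sdiff.mp hi).2]
        · exact Finset.prod_congr rfl fun i hi => by simp [hi]
      rw [this, Finset.prod_boole]
      by_cases h : ∀ i, x i ≤ if i ∈ S then b i else a i <;> simp [h, Set.mem_setOf_eq]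
    rw [hL, Finset.prod_sub]
    refine Finset.sum_nbij' (fun t => Finset.univ \ t) (fun S => Finset.univ \ S)
      (fun t _ => Finset.mem_univ _) (fun S _ => Finset.mem_powerset.mpr (Finset.sdiff_subset))
      (fun t ht => by
        have := Finset.mem_powerset.mp ht
        ext i; simp only [Finset.mem_sdiff, Finset.mem_univ, true_and, not_not])
      (fun S _ => by ext i; simp) ?_
    intro t ht
    rw [hR]
    have hcard : (Finset.univ \ t).card = Fintype.card ι - t.card := by
      rw [Finset.card_sdiff_of_subset (t.subset_univ), Finset.card_univ]
    have hcard2 : Fintype.card ι - (Finset.univ \ t).card = t.card := by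
      rw [hcard]
      have := Finset.card_le_univ t
      omega
    rw [hcard2]
    have h3 : Finset.univ \ (Finset.univ \ t) = t := by
      have := Finset.mem_powerset.mp ht
      ext i; simp only [Finset.mem_sdiff, Finset.mem_univ, true_and, not_not]
    rw [h3]
    ring
  -- integrate the pointwise identity
  have hInt : ∀ c : ι → ℝ,
      Integrable (indicator {x : ι → ℝ | ∀ i, x i ≤ c i} (fun _ => (1:ℝ))) μ :=
    fun c => (integrable_const (1:ℝ)).indicator (hQ c)
  calc (μ {x | ∀ i, a i < x i ∧ x i ≤ b i}).toReal
      = ∫ x, indicator {x : ι → ℝ | ∀ i, a i < x i ∧ x i ≤ b i} (fun _ => (1:ℝ)) x ∂μ := by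
        exact (integral_indicator_one hbox).symm
    _ = ∫ x, ∑ S : Finset ι, (-1 : ℝ) ^ (Fintype.card ι - S.card) *
          indicator {x : ι → ℝ | ∀ i, x i ≤ if i ∈ S then b i else a i} (fun _ => (1:ℝ)) x ∂μ := by
        exact integral_congr_ae (Filter.Eventually.of_forall key)
    _ = ∑ S : Finset ι, (-1 : ℝ) ^ (Fintype.card ι - S.card) *
        (μ {x | ∀ i, x i ≤ if i ∈ S then b i else a i}).toReal := by
        rw [integral_finset_sum _ fun S _ => (hInt _).const_mul _]
        exact Finset.sum_congr rfl fun S _ => by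
          rw [integral_const_mul]
          exact congrArg _ (integral_indicator_one (hQ _))
end

section
/- Conditional independence collapses the conditioning variables in the conditional distribution: if X and Y are conditionally independent given Z, then for (law of (Y, Z))-almost every (y, z), the conditional distribution of X given (Y, Z) evaluated at (y, z) equals the conditional distribution of X given Z evaluated at z. -/
/-!
Conditional independence of `Y` and `X` given `Z` says exactly that `condDistrib X (Z, Y)` agrees
a.e. with `condDistrib X Z` (`condIndepFun_iff_condDistrib_prod_ae_eq_prodMkRight`). It remains to
reorder the conditioning pair: conditional distributions are transported along any measurable
equivalence applied to the conditioning variable, here `Prod.swap`.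
-/

open MeasureTheory ProbabilityTheory

lemma MeasureTheory.Measure.map_compProd_comap_symm {α β γ : Type*} {mα : MeasurableSpace α}
    {mβ : MeasurableSpace β} {mγ : MeasurableSpace γ} (μ : Measure α) [SFinite μ]
    (κ : Kernel α γ) [IsSFiniteKernel κ] (e : α ≃ᵐ β) :
    μ.map e ⊗ₘ κ.comap e.symm e.symm.measurable = (μ ⊗ₘ κ).map (Prod.map e id) := by
  ext s hs
  rw [Measure.map_apply (e.measurable.prodMap measurable_id) hs, Measure.compProd_apply hs,
    Measure.compProd_apply (e.measurable.prodMap measurable_id hs), lintegral_map_equiv]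
  simp only [Kernel.comap_apply, MeasurableEquiv.symm_apply_apply]
  rfl

lemma ProbabilityTheory.condDistrib_comp_measurableEquiv {α β γ Ω : Type*}
    {mα : MeasurableSpace α} {mβ : MeasurableSpace β} {mγ : MeasurableSpace γ}
    [MeasurableSpace Ω] [StandardBorelSpace Ω] [Nonempty Ω] {μ : Measure α} [IsFiniteMeasure μ]
    {X : α → β} {Y : α → Ω} (hX : AEMeasurable X μ) (hY : AEMeasurable Y μ) (e : β ≃ᵐ γ) :
    condDistrib Y (e ∘ X) μ =ᵐ[μ.map (e ∘ X)]
      (condDistrib Y X μ).comap e.symm e.symm.measurable := by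
  refine condDistrib_ae_eq_of_measure_eq_compProd (e ∘ X) hY ?_
  rw [← AEMeasurable.map_map_of_aemeasurable e.measurable.aemeasurable hX,
    Measure.map_compProd_comap_symm, compProd_map_condDistrib hY,
    AEMeasurable.map_map_of_aemeasurable (by fun_prop) (hX.prodMk hY)]
  rfl

theorem condDistrib_of_condIndepFun_general
    {Ω E F G : Type*} [MeasurableSpace Ω] [StandardBorelSpace Ω]
    [MeasurableSpace E] [StandardBorelSpace E] [Nonempty E]
    [MeasurableSpace F] [StandardBorelSpace F] [Nonempty F]
    [MeasurableSpace G]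
    (μ : Measure Ω) [IsProbabilityMeasure μ]
    (X : Ω → E) (Y : Ω → F) (Z : Ω → G)
    (hX : Measurable X) (hY : Measurable Y) (hZ : Measurable Z)
    (hCI : CondIndepFun (MeasurableSpace.comap Z inferInstance)
      (measurable_iff_comap_le.mp hZ) X Y μ) :
    ∀ᵐ p ∂(μ.map fun ω => (Y ω, Z ω)),
      condDistrib X (fun ω => (Y ω, Z ω)) μ p = condDistrib X Z μ p.2 := by
  have hcollapse := (condIndepFun_iff_condDistrib_prod_ae_eq_prodMkRight hX hY hZ).mp hCI.symm
  have hswap : MeasurePreserving Prod.swap (μ.map fun ω => (Y ω, Z ω))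
      (μ.map fun ω => (Z ω, Y ω)) :=
    ⟨measurable_swap, by rw [Measure.map_map measurable_swap (hY.prodMk hZ)]; rfl⟩
  filter_upwards [condDistrib_comp_measurableEquiv (hZ.prodMk hY).aemeasurable hX.aemeasurable
      MeasurableEquiv.prodComm, hswap.quasiMeasurePreserving.ae_eq_comp hcollapse] with p h1 h2
  exact h1.trans h2

/-- **Conditional independence collapses the conditioning variables in the conditional
distribution.**  If `X` and `Y` are conditionally independent given `Z` (i.e., given the
σ-algebra generated by `Z`), then for (law of `(Y, Z)`)-almost every `(y, z)`, the conditional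
distribution of `X` given `(Y, Z)` at `(y, z)` equals the conditional distribution of `X`
given `Z` at `z`. -/
theorem condDistrib_of_condIndepFun
    {Ω E F G : Type*} [MeasurableSpace Ω] [StandardBorelSpace Ω]
    [MeasurableSpace E] [StandardBorelSpace E] [Nonempty E]
    [MeasurableSpace F] [StandardBorelSpace F] [Nonempty F]
    [MeasurableSpace G] [StandardBorelSpace G] [Nonempty G]
    (μ : Measure Ω) [IsProbabilityMeasure μ]
    (X : Ω → E) (Y : Ω → F) (Z : Ω → G)
    (hX : Measurable X) (hY : Measurable Y) (hZ : Measurable Z)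
    (hCI : CondIndepFun (MeasurableSpace.comap Z inferInstance)
      (measurable_iff_comap_le.mp hZ) X Y μ) :
    ∀ᵐ p ∂(μ.map fun ω => (Y ω, Z ω)),
      condDistrib X (fun ω => (Y ω, Z ω)) μ p = condDistrib X Z μ p.2 :=
  condDistrib_of_condIndepFun_general μ X Y Z hX hY hZ hCI
end

section
/- Weak convergence of product measures: if the sequence of probability measures (μ_n) on X converges weakly to μ and the sequence (ν_n) on Y converges weakly to ν, then the sequence of product measures (μ_n ⊗ ν_n) on X × Y converges weakly to μ ⊗ ν. -/
open MeasureTheory Filter Topology BoundedContinuousFunction TopologicalSpace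

/-! Weak convergence of probability measures is convergence in the topology of
`ProbabilityMeasure`, and on second countable pseudo-metrizable spaces the product map
`(P, Q) ↦ P ⊗ Q` is continuous for that topology (`ProbabilityMeasure.continuous_prod`). -/

lemma TopologicalSpace.secondCountableTopology_of_separableSpace (X : Type*) [TopologicalSpace X]
    [PseudoMetrizableSpace X] [SeparableSpace X] : SecondCountableTopology X :=
  letI := pseudoMetrizableSpacePseudoMetric X
  UniformSpace.secondCountable_of_separable X

lemma MeasureTheory.ProbabilityMeasure.tendsto_prod {X Y ι : Type*} {l : Filter ι}
    [TopologicalSpace X] [SecondCountableTopology X] [PseudoMetrizableSpace X]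
    [MeasurableSpace X] [OpensMeasurableSpace X]
    [TopologicalSpace Y] [SecondCountableTopology Y] [PseudoMetrizableSpace Y]
    [MeasurableSpace Y] [OpensMeasurableSpace Y]
    {P : ι → ProbabilityMeasure X} {P₀ : ProbabilityMeasure X}
    {Q : ι → ProbabilityMeasure Y} {Q₀ : ProbabilityMeasure Y}
    (hP : Tendsto P l (𝓝 P₀)) (hQ : Tendsto Q l (𝓝 Q₀)) :
    Tendsto (fun i ↦ (P i).prod (Q i)) l (𝓝 (P₀.prod Q₀)) :=
  (ProbabilityMeasure.continuous_prod.tendsto (P₀, Q₀)).comp (hP.prodMk_nhds hQ)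

/-- **Weak convergence of product measures.**
Let `X, Y` be separable metrizable spaces with their Borel σ-algebras.  If the probability
measures `μs n` converge weakly to `μ` (i.e. integrals of bounded continuous functions
converge) and `νs n` converge weakly to `ν`, then `μs n ⊗ νs n` converges weakly to
`μ ⊗ ν`. -/
theorem weak_convergence_prod
    {X Y : Type*}
    [TopologicalSpace X] [TopologicalSpace.MetrizableSpace X]
    [TopologicalSpace.SeparableSpace X]
    [MeasurableSpace X] [BorelSpace X]
    [TopologicalSpace Y] [TopologicalSpace.MetrizableSpace Y]
    [TopologicalSpace.SeparableSpace Y]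
    [MeasurableSpace Y] [BorelSpace Y]
    (μs : ℕ → Measure X) (μ : Measure X)
    (νs : ℕ → Measure Y) (ν : Measure Y)
    [∀ n, IsProbabilityMeasure (μs n)] [IsProbabilityMeasure μ]
    [∀ n, IsProbabilityMeasure (νs n)] [IsProbabilityMeasure ν]
    (hμ : ∀ g : X →ᵇ ℝ,
      Tendsto (fun n => ∫ x, g x ∂(μs n)) atTop (𝓝 (∫ x, g x ∂μ)))
    (hν : ∀ g : Y →ᵇ ℝ,
      Tendsto (fun n => ∫ y, g y ∂(νs n)) atTop (𝓝 (∫ y, g y ∂ν))) :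
    ∀ g : (X × Y) →ᵇ ℝ,
      Tendsto (fun n => ∫ p, g p ∂((μs n).prod (νs n))) atTop
        (𝓝 (∫ p, g p ∂(μ.prod ν))) := by
  have := secondCountableTopology_of_separableSpace X
  have := secondCountableTopology_of_separableSpace Y
  let P (n : ℕ) : ProbabilityMeasure X := ⟨μs n, inferInstance⟩
  let Q (n : ℕ) : ProbabilityMeasure Y := ⟨νs n, inferInstance⟩
  have hP : Tendsto P atTop (𝓝 ⟨μ, inferInstance⟩) :=
    ProbabilityMeasure.tendsto_iff_forall_integral_tendsto.mpr hμ
  have hQ : Tendsto Q atTop (𝓝 ⟨ν, inferInstance⟩) :=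
    ProbabilityMeasure.tendsto_iff_forall_integral_tendsto.mpr hν
  exact ProbabilityMeasure.tendsto_iff_forall_integral_tendsto.mp
    (ProbabilityMeasure.tendsto_prod hP hQ)
end
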